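/- Let n ≥ 1 and let L : ℝ^{n+1} → ℝ be positively 2-homogeneous (L(c·v) = c²·L(v) for all v and all c > 0), of class C^∞ on ℝ^{n+1} \ {0}, and such that for every v ≠ 0 the Hessian of L at v is nondegenerate of signature (−,+,…,+). Then every connected component C of the open set {v ∈ ℝ^{n+1} : L(v) < 0} is a convex cone: if v, w ∈ C and a, b > 0, then a·v + b·w ∈ C; in particular C is convex and closed under multiplication by positive scalars. -/

import Mathlib

open Set Filter Topology Real

lemma beem_no_local_max {f f' : ℝ → ℝ} {t₀ q : ℝ}
    (hmax : IsLocalMax f t₀)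
    (hd1 : ∀ᶠ t in 𝓝 t₀, HasDerivAt f (f' t) t)
    (hd2 : HasDerivAt f' q t₀) (hq : 0 < q) : False := by
  have h0 : f' t₀ = 0 := hmax.hasDerivAt_eq_zero hd1.self_of_nhds
  have hslope : Tendsto (slope f' t₀) (𝓝[≠] t₀) (𝓝 q) :=
    hasDerivAt_iff_tendsto_slope.mp hd2
  have hpos : ∀ᶠ t in 𝓝[≠] t₀, 0 < slope f' t₀ t :=
    hslope (Ioi_mem_nhds hq)
  have hall : ∀ᶠ t in 𝓝 t₀,
      (t ≠ t₀ → 0 < slope f' t₀ t) ∧ HasDerivAt f (f' t) t ∧ f t ≤ f t₀ :=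
    (eventually_nhdsWithin_iff.mp hpos).and (hd1.and hmax)
  obtain ⟨ε, hε, hball⟩ := Metric.eventually_nhds_iff.mp hall
  obtain ⟨t₁, ht₁⟩ : ∃ t₁, t₁ = t₀ + ε/2 := ⟨_, rfl⟩
  have ht01 : t₀ < t₁ := by rw [ht₁]; linarith
  have hsub : ∀ x ∈ Icc t₀ t₁, dist x t₀ < ε := by
    intro x hx
    obtain ⟨hx1, hx2⟩ := mem_Icc.mp hx
    rw [Real.dist_eq, abs_lt]
    constructor
    · linarith
    · rw [ht₁] at hx2; linarith
  have hderivpos : ∀ x ∈ Ioo t₀ t₁, 0 < f' x := by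
    intro x hx
    have hxball := hball (hsub x ⟨le_of_lt hx.1, le_of_lt hx.2⟩)
    have hsl := hxball.1 (ne_of_gt hx.1)
    rw [slope_def_field, h0, sub_zero] at hsl
    rcases div_pos_iff.mp hsl with ⟨h1, _⟩ | ⟨_, h2⟩
    · exact h1
    · linarith [hx.1]
  have hmono : StrictMonoOn f (Icc t₀ t₁) := by
    apply strictMonoOn_of_deriv_pos (convex_Icc t₀ t₁)
    · intro x hx
      exact ((hball (hsub x hx)).2.1.continuousAt).continuousWithinAt
    · intro x hx
      rw [interior_Icc] at hx
      rw [(hball (hsub x ⟨le_of_lt hx.1, le_of_lt hx.2⟩)).2.1.deriv]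
      exact hderivpos x hx
  have h1 : f t₀ < f t₁ := hmono (left_mem_Icc.mpr (le_of_lt ht01))
      (right_mem_Icc.mpr (le_of_lt ht01)) ht01
  have h2 : f t₁ ≤ f t₀ :=
    (hball (hsub t₁ (right_mem_Icc.mpr (le_of_lt ht01)))).2.2
  linarith


/-- Sturm-type comparison: a function `f < 0` on `[0, π]` whose square root of `-f`
satisfies `g'' + g ≤ 0` (encoded via the inequality `2 f (f'' + 2f) ≤ f'^2`) cannot exist. -/
lemma beem_sturm {f f' f'' : ℝ → ℝ}
    (hd1 : ∀ θ ∈ Icc 0 π, HasDerivAt f (f' θ) θ)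
    (hd2 : ∀ θ ∈ Icc 0 π, HasDerivAt f' (f'' θ) θ)
    (hneg : ∀ θ ∈ Icc 0 π, f θ < 0)
    (hkey : ∀ θ ∈ Icc 0 π, 2 * f θ * (f'' θ + 2 * f θ) ≤ (f' θ)^2) : False := by
  set g : ℝ → ℝ := fun θ => Real.sqrt (-f θ) with hg_def
  set G' : ℝ → ℝ := fun θ => -f' θ / (2 * g θ) with hG'_def
  set G'' : ℝ → ℝ := fun θ =>
    (-f'' θ * (2 * g θ) - (-f' θ) * (2 * G' θ)) / (2 * g θ)^2 with hG''_def
  have hgpos : ∀ θ ∈ Icc 0 π, 0 < g θ := fun θ hθ =>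
    Real.sqrt_pos.mpr (by linarith [hneg θ hθ])
  have hgsq : ∀ θ ∈ Icc 0 π, g θ ^ 2 = -f θ := fun θ hθ =>
    Real.sq_sqrt (by linarith [hneg θ hθ])
  have hdg : ∀ θ ∈ Icc 0 π, HasDerivAt g (G' θ) θ := by
    intro θ hθ
    have h1 : HasDerivAt (fun x => -f x) (-f' θ) θ := (hd1 θ hθ).neg
    have h2 := (Real.hasDerivAt_sqrt (ne_of_gt (by linarith [hneg θ hθ] : (0:ℝ) < -f θ))).comp θ h1
    refine (h2.congr_deriv ?_ : HasDerivAt g (G' θ) θ)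
    simp only [hG'_def, hg_def]
    ring
  have hdG' : ∀ θ ∈ Icc 0 π, HasDerivAt G' (G'' θ) θ := by
    intro θ hθ
    have h1 : HasDerivAt (fun x => -f' x) (-f'' θ) θ := (hd2 θ hθ).neg
    have h2 : HasDerivAt (fun x => 2 * g x) (2 * G' θ) θ := (hdg θ hθ).const_mul 2
    exact h1.div h2 (ne_of_gt (by linarith [hgpos θ hθ]))
  -- key inequality : G'' + g ≤ 0
  have hkey2 : ∀ θ ∈ Icc 0 π, G'' θ + g θ ≤ 0 := by
    intro θ hθ
    have hs := hgpos θ hθ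
    have hsq := hgsq θ hθ
    have hk := hkey θ hθ
    have h4 : (0:ℝ) < 4 * g θ^3 := by positivity
    have hfg : f θ = -(g θ^2) := by linarith
    have e1 : (G'' θ + g θ) * (4 * g θ^3) = 2 * f θ * f'' θ - f' θ^2 + 4 * (f θ)^2 := by
      rw [hG''_def, hG'_def, hfg]
      field_simp
      ring
    have hTle : 2 * f θ * f'' θ - f' θ^2 + 4 * (f θ)^2 ≤ 0 := by nlinarith [hk]
    by_contra hT
    push_neg at hT
    have := mul_pos hT h4
    rw [e1] at this
    linarith
  -- Wronskian
  set W : ℝ → ℝ := fun θ => G' θ * Real.sin θ - g θ * Real.cos θ with hW_def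
  have hdW : ∀ θ ∈ Icc 0 π, HasDerivAt W ((G'' θ + g θ) * Real.sin θ) θ := by
    intro θ hθ
    have h1 : HasDerivAt (fun x => G' x * Real.sin x) (G'' θ * Real.sin θ + G' θ * Real.cos θ) θ :=
      (hdG' θ hθ).mul (Real.hasDerivAt_sin θ)
    have h2 : HasDerivAt (fun x => g x * Real.cos x) (G' θ * Real.cos θ + g θ * (-Real.sin θ)) θ :=
      (hdg θ hθ).mul (Real.hasDerivAt_cos θ)
    have h3 := h1.sub h2
    exact h3.congr_deriv (by ring)
  have hanti : AntitoneOn W (Icc 0 π) := by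
    apply antitoneOn_of_deriv_nonpos (convex_Icc 0 π)
    · intro x hx
      exact ((hdW x hx).continuousAt).continuousWithinAt
    · intro x hx
      rw [interior_Icc] at hx
      have hx' : x ∈ Icc 0 π := ⟨le_of_lt hx.1, le_of_lt hx.2⟩
      exact (hdW x hx').differentiableAt.differentiableWithinAt
    · intro x hx
      rw [interior_Icc] at hx
      have hx' : x ∈ Icc 0 π := ⟨le_of_lt hx.1, le_of_lt hx.2⟩
      rw [(hdW x hx').deriv]
      exact mul_nonpos_of_nonpos_of_nonneg (hkey2 x hx')
        (Real.sin_nonneg_of_nonneg_of_le_pi (le_of_lt hx.1) (le_of_lt hx.2))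
  have hmem0 : (0:ℝ) ∈ Icc 0 π := left_mem_Icc.mpr (le_of_lt Real.pi_pos)
  have hmemπ : π ∈ Icc 0 π := right_mem_Icc.mpr (le_of_lt Real.pi_pos)
  have hWle : W π ≤ W 0 := hanti hmem0 hmemπ (le_of_lt Real.pi_pos)
  have hW0 : W 0 = -g 0 := by simp [hW_def]
  have hWπ : W π = g π := by simp [hW_def]
  rw [hW0, hWπ] at hWle
  linarith [hgpos 0 hmem0, hgpos π hmemπ]


section calc_layer
variable {E : Type*} [NormedAddCommGroup E] [NormedSpace ℝ E]
variable {L : E → ℝ}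

lemma beem_curve (u : E) : HasDerivAt (fun c : ℝ => c • u) u 1 := by
  simpa using (hasDerivAt_id (1:ℝ)).smul_const u

variable (hsmooth : ContDiffOn ℝ (⊤ : ℕ∞) L {0}ᶜ)
include hsmooth

lemma beem_hdL {u : E} (hu : u ≠ 0) : HasFDerivAt L (fderiv ℝ L u) u :=
  ((hsmooth.contDiffAt ((isOpen_compl_singleton).mem_nhds hu)).differentiableAt
    (by simp)).hasFDerivAt

lemma beem_hdF {u : E} (hu : u ≠ 0) :
    HasFDerivAt (fderiv ℝ L) (fderiv ℝ (fderiv ℝ L) u) u :=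
  (((hsmooth.contDiffAt ((isOpen_compl_singleton).mem_nhds hu)).fderiv_right
    (m := 1) (WithTop.coe_le_coe.mpr le_top)).differentiableAt one_ne_zero).hasFDerivAt

lemma beem_symm {u : E} (hu : u ≠ 0) (a b : E) :
    fderiv ℝ (fderiv ℝ L) u a b = fderiv ℝ (fderiv ℝ L) u b a := by
  have hev : ∀ᶠ y in 𝓝 u, HasFDerivAt L (fderiv ℝ L y) y := by
    filter_upwards [isOpen_compl_singleton.mem_nhds (show u ∈ {(0:E)}ᶜ from hu)] with y hy
    exact beem_hdL hsmooth hy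
  exact second_derivative_symmetric_of_eventually hev (beem_hdF hsmooth hu) a b

variable (hhom : ∀ (v : E) (c : ℝ), 0 < c → L (c • v) = c ^ 2 * L v)
include hhom

omit hsmooth in
lemma beem_L0 : L 0 = 0 := by
  have h := hhom 0 2 two_pos
  rw [smul_zero] at h
  norm_num at h
  linarith

lemma beem_Fhom {u : E} (hu : u ≠ 0) {c : ℝ} (hc : 0 < c) :
    fderiv ℝ L (c • u) = c • fderiv ℝ L u := by
  have hcu : c • u ≠ 0 := smul_ne_zero (ne_of_gt hc) hu
  have hfun : (fun v : E => L (c • v)) = fun v => c ^ 2 * L v :=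
    funext fun v => hhom v c hc
  have hsm : HasFDerivAt (fun v : E => c • v) (c • ContinuousLinearMap.id ℝ E) u :=
    (c • ContinuousLinearMap.id ℝ E).hasFDerivAt
  have h1 : HasFDerivAt (fun v : E => L (c • v))
      ((fderiv ℝ L (c • u)).comp (c • ContinuousLinearMap.id ℝ E)) u :=
    (beem_hdL hsmooth hcu).comp u hsm
  have h2 : HasFDerivAt (fun v : E => c ^ 2 * L v) ((c ^ 2) • fderiv ℝ L u) u :=
    (beem_hdL hsmooth hu).const_mul (c ^ 2)
  rw [hfun] at h1
  have heq := h1.unique h2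
  ext z
  have h3 := congrFun (congrArg DFunLike.coe heq) z
  simp only [ContinuousLinearMap.coe_comp', Function.comp_apply,
    ContinuousLinearMap.coe_smul', Pi.smul_apply, ContinuousLinearMap.coe_id',
    id_eq, smul_eq_mul, map_smul] at h3 ⊢
  have hcne : c ≠ 0 := ne_of_gt hc
  nlinarith [h3]

lemma beem_euler1 {u : E} (hu : u ≠ 0) : fderiv ℝ L u u = 2 * L u := by
  have hf : HasFDerivAt L (fderiv ℝ L u) ((1:ℝ) • u) := by
    rw [one_smul]; exact beem_hdL hsmooth hu
  have h1 : HasDerivAt (fun c : ℝ => L (c • u)) (fderiv ℝ L u u) 1 := by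
    have := hf.comp_hasDerivAt 1 (beem_curve u)
    exact this
  have h2 : HasDerivAt (fun c : ℝ => c ^ 2 * L u) (2 * L u) 1 := by
    simpa using (hasDerivAt_pow 2 (1:ℝ)).mul_const (L u)
  have heq : (fun c : ℝ => L (c • u)) =ᶠ[𝓝 1] fun c => c ^ 2 * L u := by
    filter_upwards [eventually_gt_nhds (show (0:ℝ) < 1 by norm_num)] with c hc
    exact hhom u c hc
  exact ((h2.congr_of_eventuallyEq heq).unique h1).symm

lemma beem_euler2 {u : E} (hu : u ≠ 0) :
    fderiv ℝ (fderiv ℝ L) u u = fderiv ℝ L u := by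
  have hf : HasFDerivAt (fderiv ℝ L) (fderiv ℝ (fderiv ℝ L) u) ((1:ℝ) • u) := by
    rw [one_smul]; exact beem_hdF hsmooth hu
  have h1 : HasDerivAt (fun c : ℝ => fderiv ℝ L (c • u)) (fderiv ℝ (fderiv ℝ L) u u) 1 := by
    have := hf.comp_hasDerivAt 1 (beem_curve u)
    exact this
  have h2 : HasDerivAt (fun c : ℝ => c • fderiv ℝ L u) (fderiv ℝ L u) 1 := by
    simpa using (hasDerivAt_id (1:ℝ)).smul_const (fderiv ℝ L u)
  have heq : (fun c : ℝ => fderiv ℝ L (c • u)) =ᶠ[𝓝 1] fun c => c • fderiv ℝ L u := by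
    filter_upwards [eventually_gt_nhds (show (0:ℝ) < 1 by norm_num)] with c hc
    exact beem_Fhom hsmooth hhom hu hc
  exact ((h2.congr_of_eventuallyEq heq).unique h1).symm

open Real in

omit hhom in
lemma beem_seg_d1 {p z : E} {t : ℝ} (hne : p + t • z ≠ 0) :
    HasDerivAt (fun s : ℝ => L (p + s • z)) (fderiv ℝ L (p + t • z) z) t := by
  have hc : HasDerivAt (fun s : ℝ => p + s • z) z t := by
    simpa using ((hasDerivAt_id t).smul_const z).const_add p
  exact HasFDerivAt.comp_hasDerivAt (f := fun s : ℝ => p + s • z) t (beem_hdL hsmooth hne) hc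

omit hhom in
lemma beem_seg_d2 {p z : E} {t : ℝ} (hne : p + t • z ≠ 0) :
    HasDerivAt (fun s : ℝ => fderiv ℝ L (p + s • z) z)
      (fderiv ℝ (fderiv ℝ L) (p + t • z) z z) t := by
  have hc : HasDerivAt (fun s : ℝ => p + s • z) z t := by
    simpa using ((hasDerivAt_id t).smul_const z).const_add p
  have h := HasFDerivAt.comp_hasDerivAt (f := fun s : ℝ => p + s • z) t (beem_hdF hsmooth hne) hc
  have h2 := h.clm_apply (hasDerivAt_const t z)
  simpa using h2

omit hhom in
lemma beem_circ_d1 {vh ζ : E} (hne : Real.cos θ • vh + Real.sin θ • ζ ≠ 0) :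
    HasDerivAt (fun s : ℝ => L (Real.cos s • vh + Real.sin s • ζ))
      (fderiv ℝ L (Real.cos θ • vh + Real.sin θ • ζ)
        (-Real.sin θ • vh + Real.cos θ • ζ)) θ := by
  have hc : HasDerivAt (fun s : ℝ => Real.cos s • vh + Real.sin s • ζ)
      (-Real.sin θ • vh + Real.cos θ • ζ) θ :=
    ((Real.hasDerivAt_cos θ).smul_const vh).add ((Real.hasDerivAt_sin θ).smul_const ζ)
  exact HasFDerivAt.comp_hasDerivAt (f := fun s : ℝ => Real.cos s • vh + Real.sin s • ζ) θ (beem_hdL hsmooth hne) hc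

omit hhom in
lemma beem_circ_d2 {vh ζ : E} (hne : Real.cos θ • vh + Real.sin θ • ζ ≠ 0) :
    HasDerivAt (fun s : ℝ => fderiv ℝ L (Real.cos s • vh + Real.sin s • ζ)
        (-Real.sin s • vh + Real.cos s • ζ))
      (fderiv ℝ (fderiv ℝ L) (Real.cos θ • vh + Real.sin θ • ζ)
          (-Real.sin θ • vh + Real.cos θ • ζ) (-Real.sin θ • vh + Real.cos θ • ζ)
        + fderiv ℝ L (Real.cos θ • vh + Real.sin θ • ζ)
          (-(Real.cos θ • vh + Real.sin θ • ζ))) θ := by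
  have hc : HasDerivAt (fun s : ℝ => Real.cos s • vh + Real.sin s • ζ)
      (-Real.sin θ • vh + Real.cos θ • ζ) θ :=
    ((Real.hasDerivAt_cos θ).smul_const vh).add ((Real.hasDerivAt_sin θ).smul_const ζ)
  have hc' : HasDerivAt (fun s : ℝ => -Real.sin s • vh + Real.cos s • ζ)
      (-(Real.cos θ • vh + Real.sin θ • ζ)) θ := by
    have h1 : HasDerivAt (fun s : ℝ => -Real.sin s) (-Real.cos θ) θ :=
      (Real.hasDerivAt_sin θ).neg
    have := (h1.smul_const vh).add (((Real.hasDerivAt_cos θ)).smul_const ζ)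
    exact this.congr_deriv (by module)
  have h := HasFDerivAt.comp_hasDerivAt (f := fun s : ℝ => Real.cos s • vh + Real.sin s • ζ) θ (beem_hdF hsmooth hne) hc
  exact h.clm_apply hc'


lemma beem_Topen : IsOpen {u : E | L u < 0} := by
  rw [isOpen_iff_mem_nhds]
  intro u hu
  have hu0 : u ≠ 0 := by
    rintro rfl
    rw [mem_setOf_eq, beem_L0 hhom] at hu
    exact lt_irrefl 0 hu
  exact (beem_hdL hsmooth hu0).continuousAt.preimage_mem_nhds (Iio_mem_nhds hu)

omit hsmooth in
lemma beem_scale_mem {v : E} (hv : L v < 0) {c : ℝ} (hc : 0 < c) :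
    c • v ∈ connectedComponentIn {u : E | L u < 0} v := by
  set S := (fun t : ℝ => ((1 - t) + t * c) • v) '' Icc 0 1 with hS
  have hconn : IsPreconnected S :=
    (isPreconnected_Icc).image _ (by fun_prop : Continuous fun t : ℝ => ((1 - t) + t * c) • v).continuousOn
  have hvS : v ∈ S := ⟨0, by simp, by simp⟩
  have hsub : S ⊆ {u : E | L u < 0} := by
    rintro _ ⟨t, ht, rfl⟩
    have hpos : 0 < (1 - t) + t * c := by
      rcases ht with ⟨h0, h1⟩
      rcases eq_or_lt_of_le h1 with rfl | h
      · norm_num; linarith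
      · nlinarith
    rw [mem_setOf_eq, hhom v _ hpos]
    exact mul_neg_of_pos_of_neg (by positivity) hv
  have := IsPreconnected.subset_connectedComponentIn hconn hvS hsub
  apply this
  exact ⟨1, by simp, by simp⟩


/-- An interior zero of `L` along a segment between two timelike points, at a nonzero
vector, is impossible. -/
lemma beem_seg_interior_null
    (hnull : ∀ u : E, u ≠ 0 → L u = 0 → ∀ z : E, fderiv ℝ L u z = 0 →
      (∀ r : ℝ, z ≠ r • u) → 0 < fderiv ℝ (fderiv ℝ L) u z z)
    {v w : E} (hv : L v < 0) (hw : L w < 0)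
    (hle : ∀ t ∈ Icc (0:ℝ) 1, L (v + t • (w - v)) ≤ 0)
    {t₀ : ℝ} (ht₀ : t₀ ∈ Icc (0:ℝ) 1)
    (h0 : L (v + t₀ • (w - v)) = 0) (hne : v + t₀ • (w - v) ≠ 0) : False := by
  set z := w - v with hz
  set u := v + t₀ • z with hu
  have ht0 : t₀ ≠ 0 := by
    rintro rfl
    rw [hu, zero_smul, add_zero] at h0
    linarith
  have ht1 : t₀ ≠ 1 := by
    rintro rfl
    rw [hu, one_smul, hz, show v + (w - v) = w from by abel] at h0
    linarith
  have ht₀Ioo : t₀ ∈ Ioo (0:ℝ) 1 :=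
    ⟨lt_of_le_of_ne ht₀.1 (Ne.symm ht0), lt_of_le_of_ne ht₀.2 ht1⟩
  by_cases hcol : ∃ r : ℝ, z = r • u
  · obtain ⟨r, hr⟩ := hcol
    have hvu : v = (1 - t₀ * r) • u := by
      have : v = u - t₀ • z := by rw [hu]; abel
      rw [this, hr]
      module
    have hwu : w = (1 + (1 - t₀) * r) • u := by
      have : w = u + (1 - t₀) • z := by rw [hu, hz]; module
      rw [this, hr]
      module
    have hc₀ : 1 - t₀ * r ≤ 0 := by
      by_contra hcon
      push_neg at hcon
      have := hhom u _ hcon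
      rw [← hvu, h0] at this
      nlinarith
    have hc₁ : 1 + (1 - t₀) * r ≤ 0 := by
      by_contra hcon
      push_neg at hcon
      have := hhom u _ hcon
      rw [← hwu, h0] at this
      nlinarith
    have hsum : (1 - t₀) * (1 - t₀ * r) + t₀ * (1 + (1 - t₀) * r) = 1 := by ring
    nlinarith [ht₀Ioo.1, ht₀Ioo.2, mul_nonpos_of_nonneg_of_nonpos (by linarith [ht₀Ioo.2] : (0:ℝ) ≤ 1 - t₀) hc₀,
      mul_nonpos_of_nonneg_of_nonpos (le_of_lt ht₀Ioo.1) hc₁]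
  · push_neg at hcol
    have hmax : IsLocalMax (fun t : ℝ => L (v + t • z)) t₀ := by
      filter_upwards [isOpen_Ioo.mem_nhds ht₀Ioo] with t ht
      show L (v + t • z) ≤ L (v + t₀ • z)
      rw [← hu, h0]
      exact hle t ⟨le_of_lt ht.1, le_of_lt ht.2⟩
    have hd1 : ∀ᶠ t in 𝓝 t₀, HasDerivAt (fun s : ℝ => L (v + s • z))
        (fderiv ℝ L (v + t • z) z) t := by
      have hopen : IsOpen {t : ℝ | v + t • z ≠ 0} := by
        have : Continuous fun t : ℝ => v + t • z := by fun_prop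
        exact isOpen_compl_singleton.preimage this
      filter_upwards [hopen.mem_nhds (by exact hne)] with t ht
      exact beem_seg_d1 hsmooth ht
    have hf'0 : fderiv ℝ L u z = 0 := hmax.hasDerivAt_eq_zero hd1.self_of_nhds
    have hq : 0 < fderiv ℝ (fderiv ℝ L) u z z := hnull u hne h0 z hf'0 hcol
    exact beem_no_local_max hmax hd1 (beem_seg_d2 hsmooth hne) hq

omit hsmooth in
/-- Directions in the planar cone spanned by a timelike segment are timelike. -/
lemma beem_arc {v w' vh ζ : E} {p a b : ℝ}
    (hseg : ∀ t ∈ Icc (0:ℝ) 1, L (v + t • (w' - v)) < 0)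
    (hp : 0 < p) (hv : v = p • vh) (hw' : w' = a • vh + b • ζ) (hb : 0 < b)
    {θ : ℝ} (hθ1 : 0 < θ) (hθ2 : θ < Real.pi) (hχ : 0 < b * Real.cos θ - a * Real.sin θ) :
    L (Real.cos θ • vh + Real.sin θ • ζ) < 0 := by
  have hsinθ : 0 < Real.sin θ := Real.sin_pos_of_pos_of_lt_pi hθ1 hθ2
  set χ : ℝ → ℝ := fun t => (t * b) * Real.cos θ - ((1 - t) * p + t * a) * Real.sin θ with hχdef
  have hχcont : ContinuousOn χ (Icc 0 1) := by fun_prop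
  have hχ0 : χ 0 = -(p * Real.sin θ) := by simp [hχdef]
  have hχ1 : χ 1 = b * Real.cos θ - a * Real.sin θ := by simp [hχdef]
  have h0mem : (0:ℝ) ∈ Icc (χ 0) (χ 1) := by
    rw [hχ0, hχ1]
    constructor
    · nlinarith
    · linarith
  obtain ⟨t, ht, hχt⟩ := intermediate_value_Icc (by norm_num : (0:ℝ) ≤ 1) hχcont h0mem
  set α := (1 - t) * p + t * a with hα
  set β := t * b with hβ
  have hurep : v + t • (w' - v) = α • vh + β • ζ := by
    rw [hv, hw', hα, hβ]
    module
  have hχt' : β * Real.cos θ - α * Real.sin θ = 0 := hχt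
  set lam := α * Real.cos θ + β * Real.sin θ with hlam
  have h1 : α = lam * Real.cos θ := by
    have hsc := Real.sin_sq_add_cos_sq θ
    rw [hlam]
    linear_combination (-Real.sin θ) * hχt' - α * hsc
  have h2 : β = lam * Real.sin θ := by
    have hsc := Real.sin_sq_add_cos_sq θ
    rw [hlam]
    linear_combination Real.cos θ * hχt' - β * hsc
  have hxeq : v + t • (w' - v) = lam • (Real.cos θ • vh + Real.sin θ • ζ) := by
    rw [hurep, h1, h2]
    module
  have hseg_t := hseg t ht
  have hlam_nonneg : 0 ≤ lam := by
    have hβnn : 0 ≤ β := mul_nonneg ht.1 (le_of_lt hb)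
    rw [h2] at hβnn
    by_contra hcon
    push_neg at hcon
    nlinarith [mul_pos (neg_pos.mpr hcon) hsinθ]
  have hlam_pos : 0 < lam := by
    rcases lt_or_eq_of_le hlam_nonneg with h | h
    · exact h
    · exfalso
      rw [← h, zero_smul] at hxeq
      rw [hxeq, beem_L0 hhom] at hseg_t
      linarith
  have := hhom (Real.cos θ • vh + Real.sin θ • ζ) lam hlam_pos
  rw [← hxeq] at this
  nlinarith [sq_nonneg lam, mul_pos hlam_pos hlam_pos]

end calc_layer


section inner_core
open RealInnerProductSpace
variable {E : Type*} [NormedAddCommGroup E] [InnerProductSpace ℝ E] [FiniteDimensional ℝ E]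
variable {L : E → ℝ}
variable (hsmooth : ContDiffOn ℝ (⊤ : ℕ∞) L {0}ᶜ)
variable (hhom : ∀ (v : E) (c : ℝ), 0 < c → L (c • v) = c ^ 2 * L v)
include hsmooth hhom

set_option maxHeartbeats 1000000 in
lemma beem_antipodal
    (hnull : ∀ u : E, u ≠ 0 → L u = 0 → ∀ z : E, fderiv ℝ L u z = 0 →
      (∀ r : ℝ, z ≠ r • u) → 0 < fderiv ℝ (fderiv ℝ L) u z z)
    (hrev : ∀ u : E, u ≠ 0 → L u < 0 → ∀ z : E,
      2 * L u * fderiv ℝ (fderiv ℝ L) u z z ≤ (fderiv ℝ L u z)^2)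
    {v : E} (hv : L v < 0) {c : ℝ} (hc : c < 0) (hcv : L (c • v) < 0)
    (wk : ℕ → E) (hwk : ∀ k, ∀ t ∈ Icc (0:ℝ) 1, L (v + t • (wk k - v)) < 0)
    (hlim : Tendsto wk atTop (𝓝 (c • v))) : False := by
  classical
  have hv0 : v ≠ 0 := by
    rintro rfl
    rw [beem_L0 hhom] at hv
    linarith
  set p := ‖v‖ with hpdef
  have hp : 0 < p := norm_pos_iff.mpr hv0
  set vh := p⁻¹ • v with hvhdef
  have hvph : v = p • vh := (smul_inv_smul₀ hp.ne' v).symm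
  have hvv : ⟪v, v⟫ = p * p := real_inner_self_eq_norm_mul_norm v
  have hvhnorm : ‖vh‖ = 1 := by
    rw [hvhdef, norm_smul, norm_inv, Real.norm_eq_abs, abs_of_pos hp, ← hpdef,
      inv_mul_cancel₀ hp.ne']
  have hvh_inner : ⟪vh, vh⟫ = 1 := by
    rw [hvhdef, real_inner_smul_left, real_inner_smul_right, hvv]
    field_simp
  have hcp : c * p < 0 := mul_neg_of_neg_of_pos hc hp
  set a : ℕ → ℝ := fun k => ⟪vh, wk k⟫ with hadef
  set zb : ℕ → E := fun k => wk k - a k • vh with hzbdef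
  set b : ℕ → ℝ := fun k => ‖zb k‖ with hbdef
  have hinner_cont : Continuous fun x : E => ⟪vh, x⟫ :=
    Continuous.inner continuous_const continuous_id
  have ha_lim : Tendsto a atTop (𝓝 (c * p)) := by
    have h1 := (hinner_cont.tendsto (c • v)).comp hlim
    have h2 : ⟪vh, c • v⟫ = c * p := by
      rw [real_inner_smul_right, hvph, real_inner_smul_right, hvh_inner]
      ring
    rwa [h2] at h1
  have hzb_lim : Tendsto zb atTop (𝓝 0) := by
    have h1 := hlim.sub (ha_lim.smul_const vh)
    have h2 : c • v - (c * p) • vh = 0 := by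
      rw [hvph, smul_smul]
      simp
    rwa [h2] at h1
  have hb_lim : Tendsto b atTop (𝓝 0) := by
    simpa [hbdef] using hzb_lim.norm
  have haneg : ∀ᶠ k in atTop, a k < c * p / 2 :=
    ha_lim.eventually (eventually_lt_nhds (by linarith))
  have hb_ne : ∀ᶠ k in atTop, zb k ≠ 0 := by
    filter_upwards [haneg] with k hk h0
    have hwkrep : wk k = a k • vh := by
      have h1 := sub_eq_zero.mp h0
      exact h1
    have hak : a k < 0 := by linarith
    set t₁ := p / (p - a k) with ht₁def
    have hden : 0 < p - a k := by linarith
    have ht₁0 : 0 < t₁ := div_pos hp hden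
    have ht₁1 : t₁ < 1 := (div_lt_one hden).mpr (by linarith)
    have hpt : v + t₁ • (wk k - v) = ((1 - t₁) * p + t₁ * a k) • vh := by
      rw [hwkrep]
      nth_rewrite 1 [hvph]
      nth_rewrite 1 [hvph]
      module
    have hcoef : (1 - t₁) * p + t₁ * a k = 0 := by
      rw [ht₁def]
      field_simp
      ring
    have hcontra := hwk k t₁ ⟨le_of_lt ht₁0, le_of_lt ht₁1⟩
    rw [hpt, hcoef, zero_smul, beem_L0 hhom] at hcontra
    linarith
  set zh : ℕ → E := fun k => if h : zb k = 0 then vh else (b k)⁻¹ • zb k with hzhdef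
  have hzh_sphere : ∀ k, zh k ∈ Metric.sphere (0:E) 1 := by
    intro k
    rw [mem_sphere_zero_iff_norm]
    simp only [hzhdef]
    by_cases h : zb k = 0
    · rw [dif_pos h]
      exact hvhnorm
    · rw [dif_neg h, norm_smul]
      have hbk : 0 < b k := norm_pos_iff.mpr h
      rw [norm_inv, Real.norm_eq_abs, abs_of_pos hbk, show ‖zb k‖ = b k from rfl,
        inv_mul_cancel₀ hbk.ne']
  obtain ⟨ζ, hζmem, φ, hφmono, hφtend⟩ :=
    (isCompact_sphere (0:E) 1).tendsto_subseq hzh_sphere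
  have hφatTop : Tendsto φ atTop atTop := hφmono.tendsto_atTop
  have hζnorm : ‖ζ‖ = 1 := by
    rwa [mem_sphere_zero_iff_norm] at hζmem
  have hζinner : ⟪ζ, ζ⟫ = 1 := by
    rw [real_inner_self_eq_norm_mul_norm, hζnorm]
    norm_num
  have hvhζ : ⟪vh, ζ⟫ = 0 := by
    have h1 : Tendsto (fun k => ⟪vh, zh (φ k)⟫) atTop (𝓝 ⟪vh, ζ⟫) :=
      (hinner_cont.tendsto ζ).comp hφtend
    have h2 : ∀ᶠ k in atTop, ⟪vh, zh (φ k)⟫ = 0 := by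
      filter_upwards [hφatTop.eventually hb_ne] with k hk
      have hperp : ⟪vh, zb (φ k)⟫ = 0 := by
        simp only [hzbdef, inner_sub_right, real_inner_smul_right, hvh_inner, hadef]
        ring
      simp only [hzhdef, dif_neg hk, real_inner_smul_right, hperp, mul_zero]
    have h3 : Tendsto (fun _ : ℕ => (0:ℝ)) atTop (𝓝 ⟪vh, ζ⟫) :=
      h1.congr' (by filter_upwards [h2] with k hk; exact hk)
    exact (tendsto_nhds_unique h3 tendsto_const_nhds)
  have hζvh : ⟪ζ, vh⟫ = 0 := by rw [real_inner_comm]; exact hvhζ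
  -- the limiting circle
  set γ : ℝ → E := fun θ => Real.cos θ • vh + Real.sin θ • ζ with hγdef
  set γ' : ℝ → E := fun θ => -Real.sin θ • vh + Real.cos θ • ζ with hγ'def
  have hγinner : ∀ θ, ⟪γ θ, γ θ⟫ = 1 := by
    intro θ
    rw [hγdef]
    simp only [inner_add_left, inner_add_right, real_inner_smul_left, real_inner_smul_right,
      hvh_inner, hζinner, hvhζ, hζvh]
    have := Real.sin_sq_add_cos_sq θ
    nlinarith
  have hγ'inner : ∀ θ, ⟪γ' θ, γ' θ⟫ = 1 := by
    intro θ
    rw [hγ'def]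
    simp only [inner_add_left, inner_add_right, real_inner_smul_left, real_inner_smul_right,
      hvh_inner, hζinner, hvhζ, hζvh]
    have := Real.sin_sq_add_cos_sq θ
    nlinarith
  have hγγ' : ∀ θ, ⟪γ' θ, γ θ⟫ = 0 := by
    intro θ
    rw [hγdef, hγ'def]
    simp only [inner_add_left, inner_add_right, real_inner_smul_left, real_inner_smul_right,
      hvh_inner, hζinner, hvhζ, hζvh]
    ring
  have hγne : ∀ θ, γ θ ≠ 0 := by
    intro θ h
    have := hγinner θ
    rw [h] at this
    simp at this
  have hnoncol : ∀ θ, ∀ r : ℝ, γ' θ ≠ r • γ θ := by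
    intro θ r h
    have h2 := hγγ' θ
    rw [h, real_inner_smul_left, hγinner θ] at h2
    have hr : r = 0 := by linarith
    rw [hr, zero_smul] at h
    have := hγ'inner θ
    rw [h] at this
    simp at this
  set f : ℝ → ℝ := fun θ => L (γ θ) with hfdef
  have hf0 : f 0 < 0 := by
    have hγ0 : γ 0 = vh := by
      rw [hγdef]
      simp
    rw [hfdef]
    simp only [hγ0]
    rw [hvhdef, hhom v p⁻¹ (inv_pos.mpr hp)]
    exact mul_neg_of_pos_of_neg (by positivity) hv
  have hfπ : f Real.pi < 0 := by
    have hγπ : γ Real.pi = -vh := by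
      rw [hγdef]
      simp
    rw [hfdef]
    simp only [hγπ]
    have hr : (0:ℝ) < -(c * p)⁻¹ := by
      rw [neg_pos]
      exact inv_lt_zero.mpr hcp
    have hrepr : (-(c * p)⁻¹) • (c • v) = -vh := by
      rw [hvph, smul_smul, smul_smul]
      have h9 : -(c * p)⁻¹ * c * p = -1 := by
        rw [mul_assoc, neg_mul, inv_mul_cancel₀ (ne_of_lt hcp)]
      rw [h9, neg_one_smul]
    rw [← hrepr, hhom _ _ hr]
    exact mul_neg_of_pos_of_neg (by positivity) hcv
  have hf_le : ∀ θ ∈ Icc 0 Real.pi, f θ ≤ 0 := by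
    intro θ hθ
    rcases eq_or_lt_of_le hθ.1 with h0 | hθpos
    · rw [← h0]; exact le_of_lt hf0
    rcases eq_or_lt_of_le hθ.2 with h1 | hθlt
    · rw [h1]; exact le_of_lt hfπ
    have hsinθ : 0 < Real.sin θ := Real.sin_pos_of_pos_of_lt_pi hθpos hθlt
    have hev2 : ∀ᶠ k in atTop, 0 < b (φ k) * Real.cos θ - a (φ k) * Real.sin θ := by
      have htt : Tendsto (fun k => b (φ k) * Real.cos θ - a (φ k) * Real.sin θ) atTop
          (𝓝 (0 * Real.cos θ - (c * p) * Real.sin θ)) :=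
        ((hb_lim.comp hφatTop).mul_const _).sub ((ha_lim.comp hφatTop).mul_const _)
      apply htt.eventually (eventually_gt_nhds _)
      nlinarith
    have hev3 : ∀ᶠ k in atTop, L (Real.cos θ • vh + Real.sin θ • zh (φ k)) < 0 := by
      filter_upwards [hφatTop.eventually hb_ne, hev2] with k h1 h2
      have hbk : 0 < b (φ k) := norm_pos_iff.mpr h1
      have hrep : wk (φ k) = a (φ k) • vh + b (φ k) • zh (φ k) := by
        rw [hzhdef]
        simp only [dif_neg h1]
        rw [smul_inv_smul₀ (ne_of_gt hbk)]
        rw [hzbdef]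
        module
      exact beem_arc hhom (hwk (φ k)) hp hvph hrep hbk hθpos hθlt h2
    have hx_tend : Tendsto (fun k => Real.cos θ • vh + Real.sin θ • zh (φ k)) atTop (𝓝 (γ θ)) := by
      rw [hγdef]
      exact tendsto_const_nhds.add (hφtend.const_smul (Real.sin θ))
    have hcont := (beem_hdL hsmooth (hγne θ)).continuousAt
    exact le_of_tendsto (hcont.tendsto.comp hx_tend) (hev3.mono fun k hk => le_of_lt hk)
  have hf_neg : ∀ θ ∈ Icc 0 Real.pi, f θ < 0 := by
    intro θ hθ
    rcases lt_or_eq_of_le (hf_le θ hθ) with h | h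
    · exact h
    exfalso
    have hθ0 : θ ≠ 0 := by
      rintro rfl
      rw [h] at hf0
      linarith
    have hθπ : θ ≠ Real.pi := by
      rintro rfl
      rw [h] at hfπ
      linarith
    have hθIoo : θ ∈ Ioo 0 Real.pi :=
      ⟨lt_of_le_of_ne hθ.1 (Ne.symm hθ0), lt_of_le_of_ne hθ.2 hθπ⟩
    have hmax : IsLocalMax f θ := by
      filter_upwards [isOpen_Ioo.mem_nhds hθIoo] with t ht
      show f t ≤ f θ
      rw [h]
      exact hf_le t ⟨le_of_lt ht.1, le_of_lt ht.2⟩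
    have hd1ev : ∀ᶠ t in 𝓝 θ, HasDerivAt f (fderiv ℝ L (γ t) (γ' t)) t :=
      Eventually.of_forall fun t => beem_circ_d1 hsmooth (hγne t)
    have hf'0 : fderiv ℝ L (γ θ) (γ' θ) = 0 := hmax.hasDerivAt_eq_zero hd1ev.self_of_nhds
    have hLγ : L (γ θ) = 0 := h
    have hd2 := beem_circ_d2 hsmooth (hγne θ)
    have hzero2 : fderiv ℝ L (γ θ) (-(γ θ)) = 0 := by
      rw [map_neg, beem_euler1 hsmooth hhom (hγne θ), hLγ]
      ring
    have hq : 0 < fderiv ℝ (fderiv ℝ L) (γ θ) (γ' θ) (γ' θ) +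
        fderiv ℝ L (γ θ) (-(γ θ)) := by
      rw [hzero2, add_zero]
      exact hnull (γ θ) (hγne θ) hLγ (γ' θ) hf'0 (hnoncol θ)
    exact beem_no_local_max hmax hd1ev hd2 hq
  -- Sturm comparison gives the contradiction
  apply beem_sturm
    (f := f)
    (f' := fun θ => fderiv ℝ L (γ θ) (γ' θ))
    (f'' := fun θ => fderiv ℝ (fderiv ℝ L) (γ θ) (γ' θ) (γ' θ) - 2 * f θ)
  · intro θ _
    exact beem_circ_d1 hsmooth (hγne θ)
  · intro θ _
    have hd2 := beem_circ_d2 hsmooth (hγne θ)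
    have heq : fderiv ℝ L (γ θ) (-(γ θ)) = -(2 * f θ) := by
      rw [map_neg, beem_euler1 hsmooth hhom (hγne θ)]
    rw [heq] at hd2
    have hval : fderiv ℝ (fderiv ℝ L) (γ θ) (γ' θ) (γ' θ) - 2 * f θ
        = fderiv ℝ (fderiv ℝ L) (γ θ) (γ' θ) (γ' θ) + -(2 * f θ) := by ring
    rw [hval]
    exact hd2
  · exact hf_neg
  · intro θ hθ
    have := hrev (γ θ) (hγne θ) (hf_neg θ hθ) (γ' θ)
    calc 2 * f θ * ((fderiv ℝ (fderiv ℝ L) (γ θ) (γ' θ) (γ' θ) - 2 * f θ) + 2 * f θ)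
        = 2 * L (γ θ) * fderiv ℝ (fderiv ℝ L) (γ θ) (γ' θ) (γ' θ) := by ring
      _ ≤ (fderiv ℝ L (γ θ) (γ' θ))^2 := this

lemma beem_closed
    (hnull : ∀ u : E, u ≠ 0 → L u = 0 → ∀ z : E, fderiv ℝ L u z = 0 →
      (∀ r : ℝ, z ≠ r • u) → 0 < fderiv ℝ (fderiv ℝ L) u z z)
    (hrev : ∀ u : E, u ≠ 0 → L u < 0 → ∀ z : E,
      2 * L u * fderiv ℝ (fderiv ℝ L) u z z ≤ (fderiv ℝ L u z)^2)
    {v : E} (hv : L v < 0) (wk : ℕ → E) (w : E)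
    (hwk : ∀ k, ∀ t ∈ Icc (0:ℝ) 1, L (v + t • (wk k - v)) < 0)
    (hlim : Tendsto wk atTop (𝓝 w)) (hw : L w < 0) :
    ∀ t ∈ Icc (0:ℝ) 1, L (v + t • (w - v)) < 0 := by
  have hle : ∀ s ∈ Icc (0:ℝ) 1, L (v + s • (w - v)) ≤ 0 := by
    intro s hs
    have hpt_lim : Tendsto (fun k => v + s • (wk k - v)) atTop (𝓝 (v + s • (w - v))) :=
      tendsto_const_nhds.add ((hlim.sub_const v).const_smul s)
    by_cases hz : v + s • (w - v) = 0
    · rw [hz, beem_L0 hhom]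
    · have hcont := (beem_hdL hsmooth hz).continuousAt
      exact le_of_tendsto (hcont.tendsto.comp hpt_lim)
        (Eventually.of_forall fun k => le_of_lt (hwk k s hs))
  intro t ht
  by_contra hcon
  push_neg at hcon
  have h0 : L (v + t • (w - v)) = 0 := le_antisymm (hle t ht) hcon
  by_cases hne : v + t • (w - v) = 0
  · have hv0 : v ≠ 0 := by
      intro h
      rw [h, beem_L0 hhom] at hv
      linarith
    have hw0 : w ≠ 0 := by
      intro h
      rw [h, beem_L0 hhom] at hw
      linarith
    have ht0 : t ≠ 0 := by
      intro h
      rw [h, zero_smul, add_zero] at hne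
      exact hv0 hne
    have ht1 : t ≠ 1 := by
      intro h
      rw [h, one_smul, show v + (w - v) = w from by abel] at hne
      exact hw0 hne
    have htpos : 0 < t := lt_of_le_of_ne ht.1 (Ne.symm ht0)
    have htlt : t < 1 := lt_of_le_of_ne ht.2 ht1
    have h1 : t • w = (t - 1) • v := by
      linear_combination (norm := module) hne
    have hwc : w = ((t - 1)/t) • v := by
      calc w = t⁻¹ • (t • w) := (inv_smul_smul₀ ht0 w).symm
        _ = t⁻¹ • ((t-1) • v) := by rw [h1]
        _ = ((t-1)/t) • v := by rw [smul_smul, inv_mul_eq_div]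
    have hcneg : (t - 1)/t < 0 := div_neg_of_neg_of_pos (by linarith) htpos
    have hcv2 : L (((t-1)/t) • v) < 0 := by rw [← hwc]; exact hw
    have hlim2 : Tendsto wk atTop (𝓝 (((t-1)/t) • v)) := by rw [← hwc]; exact hlim
    exact beem_antipodal hsmooth hhom hnull hrev hv hcneg hcv2 wk hwk hlim2
  · exact beem_seg_interior_null hsmooth hhom hnull hv hw hle ht h0 hne

theorem beem_core
    (hnull : ∀ u : E, u ≠ 0 → L u = 0 → ∀ z : E, fderiv ℝ L u z = 0 →
      (∀ r : ℝ, z ≠ r • u) → 0 < fderiv ℝ (fderiv ℝ L) u z z)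
    (hrev : ∀ u : E, u ≠ 0 → L u < 0 → ∀ z : E,
      2 * L u * fderiv ℝ (fderiv ℝ L) u z z ≤ (fderiv ℝ L u z)^2) :
    ∀ v ∈ {u : E | L u < 0}, ∀ w ∈ connectedComponentIn {u : E | L u < 0} v,
      ∀ a b : ℝ, 0 < a → 0 < b →
        a • v + b • w ∈ connectedComponentIn {u : E | L u < 0} v := by
  intro v hv w hwmem a b ha hb
  set T := {u : E | L u < 0} with hT
  have hTopen : IsOpen T := beem_Topen hsmooth hhom
  set A := {x : E | ∀ t ∈ Icc (0:ℝ) 1, v + t • (x - v) ∈ T} with hA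
  have hAopen : IsOpen A := by
    rw [Metric.isOpen_iff]
    intro x hx
    set K := (fun t : ℝ => v + t • (x - v)) '' Icc 0 1 with hK
    have hKcomp : IsCompact K := (isCompact_Icc).image (by fun_prop)
    have hKsub : K ⊆ T := by
      rintro _ ⟨t, ht, rfl⟩
      exact hx t ht
    obtain ⟨δ, hδ, hthick⟩ := hKcomp.exists_thickening_subset_open hTopen hKsub
    refine ⟨δ, hδ, fun y hy t ht => hthick ?_⟩
    rw [Metric.mem_thickening_iff]
    refine ⟨v + t • (x - v), ⟨t, ht, rfl⟩, ?_⟩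
    rw [dist_eq_norm, show (v + t • (y - v)) - (v + t • (x - v)) = t • (y - x) from by module,
      norm_smul]
    calc ‖t‖ * ‖y - x‖ ≤ 1 * ‖y - x‖ := by
          apply mul_le_mul_of_nonneg_right _ (norm_nonneg _)
          rw [Real.norm_eq_abs, abs_of_nonneg ht.1]
          exact ht.2
      _ = ‖y - x‖ := one_mul _
      _ < δ := by rw [← dist_eq_norm]; exact hy
  have hvT : v ∈ T := hv
  have hvA : v ∈ A := by
    intro t ht
    simpa using hvT
  have hclosure : T ∩ closure A ⊆ A := by
    rintro x ⟨hxT, hxcl⟩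
    obtain ⟨u, huA, hulim⟩ := mem_closure_iff_seq_limit.mp hxcl
    exact fun t ht => beem_closed hsmooth hhom hnull hrev hv u x (fun k => huA k) hulim hxT t ht
  have hBopen : IsOpen (T \ A) := by
    have heq : T \ A = T ∩ (closure A)ᶜ := by
      apply Subset.antisymm
      · rintro x ⟨hxT, hxA⟩
        exact ⟨hxT, fun hcl => hxA (hclosure ⟨hxT, hcl⟩)⟩
      · rintro x ⟨hxT, hxcl⟩
        exact ⟨hxT, fun hxA => hxcl (subset_closure hxA)⟩
    rw [heq]
    exact hTopen.inter isClosed_closure.isOpen_compl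
  have hCsub : connectedComponentIn T v ⊆ A := by
    apply IsPreconnected.subset_left_of_subset_union hAopen hBopen
      disjoint_sdiff_self_right
    · intro x hx
      by_cases h : x ∈ A
      · exact Or.inl h
      · exact Or.inr ⟨connectedComponentIn_subset T v hx, h⟩
    · exact ⟨v, mem_connectedComponentIn hvT, hvA⟩
    · exact isPreconnected_connectedComponentIn
  have hwA : w ∈ A := hCsub hwmem
  have hab : 0 < a + b := by linarith
  set s := b / (a + b) with hs
  have hs0 : 0 ≤ s := by positivity
  have hs1 : s ≤ 1 := by
    rw [hs, div_le_one hab]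
    linarith
  set q := v + s • (w - v) with hq
  have hqT : q ∈ T := hwA s ⟨hs0, hs1⟩
  have hqC : q ∈ connectedComponentIn T v := by
    have hconn : IsPreconnected ((fun t : ℝ => v + t • (w - v)) '' Icc 0 1) :=
      (isPreconnected_Icc).image _ (by fun_prop : Continuous fun t : ℝ => v + t • (w - v)).continuousOn
    have hsub : (fun t : ℝ => v + t • (w - v)) '' Icc 0 1 ⊆ T := by
      rintro _ ⟨t', ht', rfl⟩
      exact hwA t' ht'
    have hmem : v ∈ (fun t : ℝ => v + t • (w - v)) '' Icc 0 1 :=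
      ⟨0, left_mem_Icc.mpr (by norm_num), by simp⟩
    exact IsPreconnected.subset_connectedComponentIn hconn hmem hsub ⟨s, ⟨hs0, hs1⟩, rfl⟩
  have hqL : L q < 0 := hqT
  have hscale := beem_scale_mem hhom hqL hab
  have hCeq : connectedComponentIn T v = connectedComponentIn T q := connectedComponentIn_eq hqC
  have hfinal : (a + b) • q = a • v + b • w := by
    rw [hq, hs]
    have hcoef : (a + b) * (b / (a + b)) = b := by field_simp
    rw [smul_add, smul_smul, hcoef]
    module
  rw [hCeq, ← hfinal]
  exact hscale

end inner_core


variable {n : ℕ}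

local notation "E" => EuclideanSpace ℝ (Fin (n + 1))

/-- On the null cone, the Hessian is positive on non-radial tangent directions. -/
lemma beem_null_pos (Q : E →L[ℝ] E →L[ℝ] ℝ)
    (hsymm : ∀ a b : E, Q a b = Q b a)
    {e : E} {W : Submodule ℝ E}
    (hcompl : IsCompl (Submodule.span ℝ {e}) W)
    (hpos : ∀ w ∈ W, w ≠ 0 → 0 < Q w w)
    {u z : E} (hu : u ≠ 0) (huu : Q u u = 0) (huz : Q u z = 0)
    (hz : ∀ r : ℝ, z ≠ r • u) : 0 < Q z z := by
  have htop : Submodule.span ℝ {e} ⊔ W = ⊤ := hcompl.sup_eq_top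
  have humem : u ∈ Submodule.span ℝ {e} ⊔ W := htop ▸ Submodule.mem_top
  have hzmem : z ∈ Submodule.span ℝ {e} ⊔ W := htop ▸ Submodule.mem_top
  obtain ⟨y₀, hy₀, w₀, hw₀, hsu⟩ := Submodule.mem_sup.mp humem
  obtain ⟨α, rfl⟩ := Submodule.mem_span_singleton.mp hy₀
  obtain ⟨y₁, hy₁, w₁, hw₁, hsz⟩ := Submodule.mem_sup.mp hzmem
  obtain ⟨β, rfl⟩ := Submodule.mem_span_singleton.mp hy₁
  have hα : α ≠ 0 := by
    intro h
    rw [h, zero_smul, zero_add] at hsu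
    exact absurd huu (ne_of_gt (hpos u (hsu ▸ hw₀) hu))
  set c := β / α with hc
  set z' := z - c • u with hz'
  have hz'W : z' ∈ W := by
    have h1 : c • (α • e) = β • e := by
      rw [smul_smul, hc, div_mul_cancel₀ _ hα]
    have h2 : z' = w₁ - c • w₀ := by
      rw [hz', ← hsu, ← hsz, smul_add, h1]
      abel
    rw [h2]
    exact Submodule.sub_mem W hw₁ (Submodule.smul_mem W c hw₀)
  have hz'0 : z' ≠ 0 := by
    intro h
    apply hz c
    rw [hz'] at h
    linear_combination (norm := module) h
  have huz' : Q u z' = 0 := by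
    rw [hz']
    rw [map_sub, map_smul, huz, huu]
    simp
  have hzz : Q z z = Q z' z' := by
    have hzeq : z = z' + c • u := by rw [hz']; abel
    rw [hzeq, map_add, map_smul]
    simp only [ContinuousLinearMap.add_apply, ContinuousLinearMap.coe_smul',
      Pi.smul_apply, map_add, map_smul, smul_eq_mul]
    rw [huu, huz', hsymm z' u, huz']
    ring
  rw [hzz]
  exact hpos z' hz'W hz'0

/-- Reverse Cauchy–Schwarz for a form that is positive definite on a
codimension-one subspace, at a "timelike" vector. -/
lemma beem_revCS (Q : E →L[ℝ] E →L[ℝ] ℝ)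
    (hsymm : ∀ a b : E, Q a b = Q b a)
    {W : Submodule ℝ E} (hrank : Module.finrank ℝ W = n)
    (hpos : ∀ w ∈ W, w ≠ 0 → 0 < Q w w)
    {u z : E} (huu : Q u u < 0) : Q u u * Q z z ≤ (Q u z)^2 := by
  by_contra hcon
  push_neg at hcon
  have hprod : 0 < Q u u * Q z z := lt_of_le_of_lt (sq_nonneg _) hcon
  have hzz : Q z z < 0 := by
    rcases mul_pos_iff.mp hprod with ⟨h1, _⟩ | ⟨_, h2⟩
    · linarith
    · exact h2
  have hu : u ≠ 0 := by
    intro h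
    rw [h] at huu
    simp at huu
  have hexpand : ∀ s t : ℝ, Q (s • u + t • z) (s • u + t • z)
      = s^2 * Q u u + 2*s*t * Q u z + t^2 * Q z z := by
    intro s t
    rw [map_add, map_smul, map_smul]
    simp only [ContinuousLinearMap.add_apply, ContinuousLinearMap.coe_smul',
      Pi.smul_apply, map_add, map_smul, smul_eq_mul]
    rw [hsymm z u]
    ring
  have hnegdef : ∀ s t : ℝ, ¬(s = 0 ∧ t = 0) → Q (s • u + t • z) (s • u + t • z) < 0 := by
    intro s t hst
    rw [hexpand]
    by_cases ht : t = 0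
    · have hs : s ≠ 0 := fun h => hst ⟨h, ht⟩
      rw [ht]
      have : 0 < s^2 := by positivity
      nlinarith
    · have h2 : (s^2 * Q u u + 2*s*t * Q u z + t^2 * Q z z) * Q u u
          = (s * Q u u + t * Q u z)^2 + t^2 * (Q u u * Q z z - (Q u z)^2) := by ring
      have h3 : 0 < t^2 * (Q u u * Q z z - (Q u z)^2) := by
        apply mul_pos (by positivity)
        linarith
      nlinarith [sq_nonneg (s * Q u u + t * Q u z)]
  -- the span of u, z is 2-dimensional
  have hind : LinearIndependent ℝ ![u, z] := by
    rw [LinearIndependent.pair_iff]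
    intro s t hst0
    by_contra hst
    have := hnegdef s t (by tauto)
    rw [hst0] at this
    simp at this
  set S := Submodule.span ℝ {u, z} with hS
  have hSrank : Module.finrank ℝ S = 2 := by
    have hr : Set.range ![u, z] = {u, z} := by
      simp [Matrix.range_cons, Matrix.range_empty]
      exact Set.pair_comm z u
    have := finrank_span_eq_card hind
    rw [hr] at this
    rw [hS, this]
    simp
  have hinf : S ⊓ W ≠ ⊥ := by
    intro hbot
    have h1 := Submodule.finrank_sup_add_finrank_inf_eq S W
    rw [hbot, hSrank, hrank] at h1
    have h2 : Module.finrank ℝ ↥(S ⊔ W) ≤ Module.finrank ℝ E := Submodule.finrank_le _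
    rw [finrank_euclideanSpace_fin] at h2
    rw [finrank_bot] at h1
    omega
  obtain ⟨x, hxmem, hx0⟩ := Submodule.exists_mem_ne_zero_of_ne_bot hinf
  obtain ⟨a, b, hab⟩ := Submodule.mem_span_pair.mp hxmem.1
  have hab0 : ¬(a = 0 ∧ b = 0) := by
    rintro ⟨rfl, rfl⟩
    simp at hab
    exact hx0 hab.symm
  have hneg : Q x x < 0 := hab ▸ hnegdef a b hab0
  have hposx : 0 < Q x x := hpos x hxmem.2 hx0
  linarith



/-- For a Beem Lorentz–Finsler structure `L` on `ℝ^{n+1}`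
(positively 2-homogeneous, `C^∞` away from `0`, Hessian of signature `(−,+,…,+)`
at every nonzero point), every connected component of the open set
`{v : L v < 0}` of timelike vectors is a convex cone: if `v, w` lie in the same
connected component and `a, b > 0`, then `a • v + b • w` lies in that component. -/
theorem timelike_components_convex_cone (n : ℕ) (hn : 1 ≤ n)
    (L : EuclideanSpace ℝ (Fin (n + 1)) → ℝ)
    (hsmooth : ContDiffOn ℝ (⊤ : ℕ∞) L {0}ᶜ)
    (hhom : ∀ (v : EuclideanSpace ℝ (Fin (n + 1))) (c : ℝ), 0 < c → L (c • v) = c ^ 2 * L v)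
    (hsig : ∀ v : EuclideanSpace ℝ (Fin (n + 1)), v ≠ 0 →
      ∃ (e : EuclideanSpace ℝ (Fin (n + 1)))
        (W : Submodule ℝ (EuclideanSpace ℝ (Fin (n + 1)))),
        IsCompl (Submodule.span ℝ {e}) W ∧
        Module.finrank ℝ W = n ∧
        fderiv ℝ (fderiv ℝ L) v e e < 0 ∧
        ∀ w ∈ W, w ≠ 0 → 0 < fderiv ℝ (fderiv ℝ L) v w w) :
    ∀ v ∈ {u : EuclideanSpace ℝ (Fin (n + 1)) | L u < 0},
      ∀ w ∈ connectedComponentIn {u : EuclideanSpace ℝ (Fin (n + 1)) | L u < 0} v,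
        ∀ a b : ℝ, 0 < a → 0 < b →
          a • v + b • w ∈
            connectedComponentIn {u : EuclideanSpace ℝ (Fin (n + 1)) | L u < 0} v := by
  have hnull : ∀ u : EuclideanSpace ℝ (Fin (n + 1)), u ≠ 0 → L u = 0 →
      ∀ z, fderiv ℝ L u z = 0 → (∀ r : ℝ, z ≠ r • u) →
      0 < fderiv ℝ (fderiv ℝ L) u z z := by
    intro u hu hLu z hz hncol
    obtain ⟨e, W, hcompl, hrank, hneg, hpos⟩ := hsig u hu
    have hsymm := beem_symm hsmooth hu
    have he2 := beem_euler2 hsmooth hhom hu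
    have he1 := beem_euler1 hsmooth hhom hu
    have huu : fderiv ℝ (fderiv ℝ L) u u u = 0 := by
      rw [he2, he1, hLu]
      ring
    have huz : fderiv ℝ (fderiv ℝ L) u u z = 0 := by
      rw [he2]
      exact hz
    exact beem_null_pos (fderiv ℝ (fderiv ℝ L) u) hsymm hcompl hpos hu huu huz hncol
  have hrev : ∀ u : EuclideanSpace ℝ (Fin (n + 1)), u ≠ 0 → L u < 0 → ∀ z,
      2 * L u * fderiv ℝ (fderiv ℝ L) u z z ≤ (fderiv ℝ L u z)^2 := by
    intro u hu hLu z
    obtain ⟨e, W, hcompl, hrank, hneg, hpos⟩ := hsig u hu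
    have hsymm := beem_symm hsmooth hu
    have huu : fderiv ℝ (fderiv ℝ L) u u u = 2 * L u := by
      rw [beem_euler2 hsmooth hhom hu, beem_euler1 hsmooth hhom hu]
    have huu2 : fderiv ℝ (fderiv ℝ L) u u u < 0 := by
      rw [huu]
      linarith
    have h := beem_revCS (fderiv ℝ (fderiv ℝ L) u) hsymm hrank hpos (z := z) huu2
    rw [huu] at h
    have huz : fderiv ℝ (fderiv ℝ L) u u z = fderiv ℝ L u z := by
      rw [beem_euler2 hsmooth hhom hu]
    rw [huz] at h
    exact h
  exact beem_core hsmooth hhom hnull hrev
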